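/- arXiv:2005.14105 — 4 statements merged into one kernel-verified Lean document; each statement's English description precedes it below -/
import Mathlib

section
/- Let p ∈ ℕ, p' ∈ ℕ with 1 ≤ p' ≤ p*, s ∈ (0,1], and v : ℤ → (0,2]. Define S = ∑_{k=1}^{p-1} max(0, v(p-k) - max(0,2(p'-k)) - max(0,2(k-p'))). Then S = v(p - p') if p' < p, and S = 0 if p' ≥ p. -/
/-- The gated neuron equals `max 0 (x - 2 |t - a|)`, so for `x ≤ 2` it is open only within distance `1` of `a`. -/
def gate (x a t : ℝ) : ℝ :=
  max 0 (x - max 0 (2 * (a - t)) - max 0 (2 * (t - a)))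

lemma gate_self (x a : ℝ) : gate x a a = max 0 x := by
  simp [gate]

lemma gate_eq_zero_of_one_le_abs {x a t : ℝ} (hx : x ≤ 2) (h : 1 ≤ |t - a|) :
    gate x a t = 0 := by
  have hpen : max 0 (2 * (a - t)) + max 0 (2 * (t - a)) = 2 * |t - a| := by
    rcases le_total a t with hat | hat
    · rw [abs_of_nonneg (sub_nonneg.2 hat), max_eq_left (by linarith), max_eq_right (by linarith)]
      ring
    · rw [abs_of_nonpos (sub_nonpos.2 hat), max_eq_right (by linarith), max_eq_left (by linarith)]
      ring
  exact max_eq_left (by linarith)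

/-- Distinct naturals are at distance at least `1`, so only the gate at `k = a` is open. -/
lemma sum_gate_eq_ite (s : Finset ℕ) (a : ℕ) (f : ℕ → ℝ) (hf : ∀ k, f k ≤ 2) :
    ∑ k ∈ s, gate (f k) a k = if a ∈ s then max 0 (f a) else 0 := by
  have hsep : ∀ k : ℕ, k ≠ a → 1 ≤ |(k : ℝ) - a| := fun k hk => by
    have hne : (k : ℤ) - a ≠ 0 := sub_ne_zero.2 (by exact_mod_cast hk)
    exact_mod_cast Int.one_le_abs hne
  rw [← gate_self, ← Finset.sum_ite_eq' s a (fun k => gate (f k) a k)]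
  refine Finset.sum_congr rfl fun k _ => ?_
  by_cases hk : k = a
  · rw [if_pos hk]
  · rw [if_neg hk, gate_eq_zero_of_one_le_abs (hf k) (hsep k hk)]

theorem gated_sum_general (pstar : ℕ) (p p' : ℕ) (hp' : 1 ≤ p' ∧ p' ≤ pstar)
    (v : ℤ → ℝ) (hv : ∀ q : ℤ, 0 < v q ∧ v q ≤ 2) :
    (p' < p →
      (∑ k ∈ Finset.Icc 1 (p - 1),
        max 0 (v ((p : ℤ) - k) - max 0 (2 * ((p' : ℝ) - k)) - max 0 (2 * ((k : ℝ) - p'))))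
        = v ((p : ℤ) - p')) ∧
    (p ≤ p' →
      (∑ k ∈ Finset.Icc 1 (p - 1),
        max 0 (v ((p : ℤ) - k) - max 0 (2 * ((p' : ℝ) - k)) - max 0 (2 * ((k : ℝ) - p'))))
        = 0) := by
  have hsum := sum_gate_eq_ite (Finset.Icc 1 (p - 1)) p' (fun k => v ((p : ℤ) - k))
    fun k => (hv _).2
  simp only [gate, Finset.mem_Icc] at hsum
  refine ⟨fun hlt => ?_, fun hle => ?_⟩
  · rw [hsum, if_pos ⟨hp'.1, by omega⟩, max_eq_right (hv _).1.le]
  · rw [hsum, if_neg (by omega)]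

theorem gated_sum (pstar : ℕ) (p p' : ℕ) (hp' : 1 ≤ p' ∧ p' ≤ pstar)
    (s : ℝ) (hs : 0 < s ∧ s ≤ 1)
    (v : ℤ → ℝ) (hv : ∀ q : ℤ, 0 < v q ∧ v q ≤ 2) :
    (p' < p →
      (∑ k ∈ Finset.Icc 1 (p - 1),
        max 0 (v ((p : ℤ) - k) - max 0 (2 * ((p' : ℝ) - k)) - max 0 (2 * ((k : ℝ) - p'))))
        = v ((p : ℤ) - p')) ∧
    (p ≤ p' →
      (∑ k ∈ Finset.Icc 1 (p - 1),
        max 0 (v ((p : ℤ) - k) - max 0 (2 * ((p' : ℝ) - k)) - max 0 (2 * ((k : ℝ) - p'))))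
        = 0) :=
  gated_sum_general pstar p p' hp' v hv
end

section
/- Let P ∈ ℕ, let d_old and d_new be positive integer multiples of 1/P, and let p ∈ [P]. For k ∈ ℕ define A(k) = max(0, 2P(p·d_new - k·d_old)) and B(k) = max(0, 2P((k-1)·d_old - p·d_new) + 2). Then A(k) + B(k) = 0 if and only if k is the smallest integer with k·d_old ≥ p·d_new; otherwise A(k) + B(k) ≥ 2. -/
/-!
Multiplying by `P` turns the two arguments of `max` into the even integers `2 (p b - k a)` and
`2 ((k - 1) a - p b + 1)`. Both are `≤ 0` exactly when `(k - 1) a < p b ≤ k a`, i.e. when `k` is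
the least natural number with `p b ≤ k a`; otherwise one of them is a positive even integer.
-/

theorem max_zero_two_mul_add_max_zero_two_mul_eq_zero_iff (u v : ℤ) :
    max 0 (2 * (u : ℝ)) + max 0 (2 * (v : ℝ)) = 0 ↔ u ≤ 0 ∧ v ≤ 0 := by
  have two_mul_nonpos_iff (n : ℤ) : 2 * (n : ℝ) ≤ 0 ↔ n ≤ 0 := by norm_cast; omega
  rw [add_eq_zero_iff_of_nonneg (le_max_left _ _) (le_max_left _ _), max_eq_left_iff,
    max_eq_left_iff, two_mul_nonpos_iff, two_mul_nonpos_iff]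

theorem two_le_max_zero_two_mul_add_max_zero_two_mul {u v : ℤ} (h : ¬(u ≤ 0 ∧ v ≤ 0)) :
    (2 : ℝ) ≤ max 0 (2 * (u : ℝ)) + max 0 (2 * (v : ℝ)) := by
  have hu := le_max_left (0 : ℝ) (2 * u)
  have hv := le_max_left (0 : ℝ) (2 * v)
  rw [not_and_or, not_le, not_le] at h
  rcases h with hu_pos | hv_pos
  · have : (1 : ℝ) ≤ u := by exact_mod_cast hu_pos
    linarith [le_max_right (0 : ℝ) (2 * u)]
  · have : (1 : ℝ) ≤ v := by exact_mod_cast hv_pos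
    linarith [le_max_right (0 : ℝ) (2 * v)]

theorem forall_le_of_le_mul_iff_mul_lt_add {m a k : ℕ} (hk : 1 ≤ k) :
    (∀ k', m ≤ k' * a → k ≤ k') ↔ k * a < m + a := by
  constructor
  · intro h
    by_contra! hle
    have := h (k - 1) (by rw [Nat.sub_mul, one_mul]; omega)
    omega
  · intro h k' hk'
    by_contra! hlt
    have := Nat.mul_le_mul_right a (Nat.succ_le_of_lt hlt)
    rw [Nat.succ_mul] at this
    omega

theorem fptas_selection_gadget_general (P : ℕ) (hP : 1 ≤ P)
    (a b : ℕ)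
    (dold dnew : ℝ) (hdold : dold = (a : ℝ) / P) (hdnew : dnew = (b : ℝ) / P)
    (p : ℕ) (k : ℕ) (hk : 1 ≤ k) :
    (max 0 (2 * P * ((p : ℝ) * dnew - k * dold)) +
        max 0 (2 * P * (((k : ℝ) - 1) * dold - p * dnew) + 2) = 0 ↔
      ((p : ℝ) * dnew ≤ k * dold ∧ ∀ k' : ℕ, (p : ℝ) * dnew ≤ k' * dold → k ≤ k')) ∧
    (¬((p : ℝ) * dnew ≤ k * dold ∧ ∀ k' : ℕ, (p : ℝ) * dnew ≤ k' * dold → k ≤ k') →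
      2 ≤ max 0 (2 * P * ((p : ℝ) * dnew - k * dold)) +
        max 0 (2 * P * (((k : ℝ) - 1) * dold - p * dnew) + 2)) := by
  subst hdold hdnew
  have hP_pos : (0 : ℝ) < P := by exact_mod_cast hP
  have hA : 2 * P * ((p : ℝ) * (b / P) - k * (a / P)) = 2 * ((p * b - k * a : ℤ) : ℝ) := by
    push_cast; field_simp
  have hB : 2 * P * (((k : ℝ) - 1) * (a / P) - p * (b / P)) + 2 =
      2 * ((k * a - a - p * b + 1 : ℤ) : ℝ) := by
    push_cast; field_simp
  have hleast : ((p : ℝ) * (b / P) ≤ k * (a / P) ∧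
        ∀ k' : ℕ, (p : ℝ) * (b / P) ≤ k' * (a / P) → k ≤ k') ↔
      p * b ≤ k * a ∧ k * a < p * b + a := by
    simp_rw [← mul_div_assoc, div_le_div_iff_of_pos_right hP_pos]
    norm_cast
    rw [forall_le_of_le_mul_iff_mul_lt_add hk]
  have hint : (p * b ≤ k * a ∧ k * a < p * b + a) ↔
      ((p * b - k * a : ℤ) ≤ 0 ∧ (k * a - a - p * b + 1 : ℤ) ≤ 0) := by
    omega
  rw [hA, hB, hleast, hint]
  exact ⟨max_zero_two_mul_add_max_zero_two_mul_eq_zero_iff _ _,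
    two_le_max_zero_two_mul_add_max_zero_two_mul⟩

theorem fptas_selection_gadget (P : ℕ) (hP : 1 ≤ P)
    (a b : ℕ) (ha : 1 ≤ a) (hb : 1 ≤ b)
    (dold dnew : ℝ) (hdold : dold = (a : ℝ) / P) (hdnew : dnew = (b : ℝ) / P)
    (p : ℕ) (hp : 1 ≤ p ∧ p ≤ P) (k : ℕ) (hk : 1 ≤ k) :
    (max 0 (2 * P * ((p : ℝ) * dnew - k * dold)) +
        max 0 (2 * P * (((k : ℝ) - 1) * dold - p * dnew) + 2) = 0 ↔
      ((p : ℝ) * dnew ≤ k * dold ∧ ∀ k' : ℕ, (p : ℝ) * dnew ≤ k' * dold → k ≤ k')) ∧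
    (¬((p : ℝ) * dnew ≤ k * dold ∧ ∀ k' : ℕ, (p : ℝ) * dnew ≤ k' * dold → k ≤ k') →
      2 ≤ max 0 (2 * P * ((p : ℝ) * dnew - k * dold)) +
        max 0 (2 * P * (((k : ℝ) - 1) * dold - p * dnew) + 2)) :=
  fptas_selection_gadget_general P hP a b dold dnew hdold hdnew p k hk
end

section
/- Suppose the FPTAS-NN values g(p,i) for p ∈ [P], i ∈ {0,1,...,n}, are defined by g(p,0) = 2 and the recursion g(p,i) = min(h₁(p,i), s_i + h₂(p,i)), where h₁(p,i) = g(p⁽¹⁾, i-1) if the smallest integer p⁽¹⁾ with p⁽¹⁾d_{i-1} ≥ p·d_i satisfies p⁽¹⁾ ≤ P and h₁(p,i) = 2 otherwise, and h₂(p,i) = g(p⁽²⁾, i-1) if the smallest integer p⁽²⁾ with p⁽²⁾d_{i-1} + p_i ≥ p·d_i satisfies p⁽²⁾ ≥ 1 and h₂(p,i) = 0 otherwise; here d_i = max(1, (∑_{j≤i} p_j)/P). Then for every i ∈ [n] and p ∈ [P] with g(p,i) < 2, there exists a subset M ⊆ [i] with total profit ∑_{j∈M} p_j ≥ p·d_i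 and total size ∑_{j∈M} s_j ≤ g(p,i). -/
/-!
Induction on `i`. The ceilings `⌈p d_i / d_{i-1}⌉` and `⌈(p d_i - p_i) / d_{i-1}⌉` are the least
integers `p⁽¹⁾`, `p⁽²⁾` of the recursion, and a witness for `g(p, i) < 2` is the witness for
`g(p⁽¹⁾, i-1)`, or the witness for `g(p⁽²⁾, i-1)` together with item `i`, according to which
branch realises the minimum. The second branch never leaves the table: `p⁽²⁾ ≤ P` because
`P d_i ≤ P d_{i-1} + p_i`, and when `p⁽²⁾ ≤ 0` item `i` alone already has enough profit.
-/

/-- The rounding granularity `d_i = max(1, (∑_{j ≤ i} p_j) / P)` of the FPTAS-NN. -/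
noncomputable def granularity (P : ℕ) (pr : ℕ → ℕ) (i : ℕ) : ℝ :=
  max 1 ((∑ j ∈ Finset.Icc 1 i, (pr j : ℝ)) / P)

open Finset

lemma granularity_pos (P : ℕ) (pr : ℕ → ℕ) (i : ℕ) : 0 < granularity P pr i :=
  one_pos.trans_le (le_max_left _ _)

lemma natCast_mul_granularity_succ_le (P : ℕ) (pr : ℕ → ℕ) (m : ℕ) :
    (P : ℝ) * granularity P pr (m + 1) ≤ P * granularity P pr m + pr (m + 1) := by
  rcases Nat.eq_zero_or_pos P with rfl | hP
  · simp
  have hP' : (0 : ℝ) < P := Nat.cast_pos.mpr hP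
  simp only [granularity, mul_max_of_nonneg _ _ hP'.le, mul_div_cancel₀ _ hP'.ne',
    sum_Icc_succ_top (Nat.le_add_left 1 m), mul_one]
  exact max_le (le_add_of_le_of_nonneg (le_max_left _ _) (Nat.cast_nonneg _))
    (add_le_add_left (le_max_right _ _) _)

lemma isLeast_ceil_sub_div (c d e : ℝ) (hd : 0 < d) :
    IsLeast {k : ℤ | c ≤ k * d + e} ⌈(c - e) / d⌉ := by
  have key : ∀ k : ℤ, c ≤ k * d + e ↔ (c - e) / d ≤ k := fun k => by
    rw [div_le_iff₀ hd]
    constructor <;> intro h <;> linarith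
  exact ⟨(key _).mpr (Int.le_ceil _), fun k hk => Int.ceil_le.mpr ((key k).mp hk)⟩

lemma isLeast_ceil_div (c d : ℝ) (hd : 0 < d) :
    IsLeast {k : ℤ | c ≤ k * d} ⌈c / d⌉ := by
  simpa using isLeast_ceil_sub_div c d 0 hd

lemma Int.cast_toNat_of_nonneg {R : Type*} [AddGroupWithOne R] {k : ℤ} (hk : 0 ≤ k) :
    ((k.toNat : ℕ) : R) = k := by
  rw [← Int.cast_natCast, Int.toNat_of_nonneg hk]

section Achievable

variable {pr : ℕ → ℕ} {s : ℕ → ℝ} {i : ℕ} {c c' x x' : ℝ}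

def Achievable (pr : ℕ → ℕ) (s : ℕ → ℝ) (i : ℕ) (c x : ℝ) : Prop :=
  ∃ M : Finset ℕ, M ⊆ Icc 1 i ∧ c ≤ ∑ j ∈ M, (pr j : ℝ) ∧ ∑ j ∈ M, s j ≤ x

lemma achievable_of_nonpos (hc : c ≤ 0) (hx : 0 ≤ x) : Achievable pr s i c x :=
  ⟨∅, empty_subset _, by simpa using hc, by simpa using hx⟩

lemma Achievable.mono (h : Achievable pr s i c x) (hc : c' ≤ c) (hx : x ≤ x') :
    Achievable pr s i c' x' :=
  let ⟨M, hM, hpr, hs⟩ := h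
  ⟨M, hM, hc.trans hpr, hs.trans hx⟩

lemma Achievable.succ (h : Achievable pr s i c x) : Achievable pr s (i + 1) c x :=
  let ⟨M, hM, hpr, hs⟩ := h
  ⟨M, hM.trans (Icc_subset_Icc_right (Nat.le_succ i)), hpr, hs⟩

lemma Achievable.insert_succ (h : Achievable pr s i c x) :
    Achievable pr s (i + 1) (c + pr (i + 1)) (s (i + 1) + x) := by
  obtain ⟨M, hM, hpr, hs⟩ := h
  have hnot : i + 1 ∉ M := fun hmem => by simpa using (mem_Icc.mp (hM hmem)).2
  refine ⟨insert (i + 1) M, insert_subset (by simp) (hM.trans ?_), ?_, ?_⟩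
  · exact Icc_subset_Icc_right (Nat.le_succ i)
  · rw [sum_insert hnot]; linarith
  · rw [sum_insert hnot]; linarith

end Achievable

section Recursion

variable {P : ℕ} {pr : ℕ → ℕ} {s : ℕ → ℝ} {g : ℕ → ℕ → ℝ} {m : ℕ} {c : ℝ}

lemma achievable_of_skip_item {k : ℤ} {d : ℝ} (hd : 0 ≤ d) (hc : 0 < c) (hk : c ≤ k * d)
    (hIH : ∀ q ∈ Icc 1 P, g q m < 2 → Achievable pr s m (q * d) (g q m))
    (hlt : (if k ≤ P then g k.toNat m else 2) < 2) :
    Achievable pr s (m + 1) c (if k ≤ P then g k.toNat m else 2) := by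
  have hkP : k ≤ P := by
    by_contra h
    simp [h] at hlt
  have hk1 : 1 ≤ k := by
    by_contra! h
    have : (k : ℝ) * d ≤ 0 := by
      nlinarith [show (k : ℝ) ≤ 0 by exact_mod_cast (by omega : k ≤ 0)]
    linarith
  rw [if_pos hkP] at hlt ⊢
  have hIHk := hIH k.toNat (mem_Icc.mpr ⟨by omega, by omega⟩) hlt
  rw [Int.cast_toNat_of_nonneg (by omega)] at hIHk
  exact (hIHk.mono hk le_rfl).succ

lemma achievable_of_take_item {k : ℤ} {d : ℝ} (hd : 0 ≤ d) (hs : 0 ≤ s (m + 1))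
    (hk : c ≤ k * d + pr (m + 1)) (hkP : k ≤ P)
    (hIH : ∀ q ∈ Icc 1 P, g q m < 2 → Achievable pr s m (q * d) (g q m))
    (hlt : s (m + 1) + (if 1 ≤ k then g k.toNat m else 0) < 2) :
    Achievable pr s (m + 1) c (s (m + 1) + if 1 ≤ k then g k.toNat m else 0) := by
  suffices h : Achievable pr s m (k * d) (if 1 ≤ k then g k.toNat m else 0) from
    h.insert_succ.mono hk le_rfl
  by_cases hk1 : 1 ≤ k
  · rw [if_pos hk1] at hlt ⊢
    have hIHk := hIH k.toNat (mem_Icc.mpr ⟨by omega, by omega⟩) (by linarith)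
    rwa [Int.cast_toNat_of_nonneg (by omega)] at hIHk
  · rw [if_neg hk1]
    have hk0 : (k : ℝ) ≤ 0 := by exact_mod_cast (by omega : k ≤ 0)
    exact achievable_of_nonpos (by nlinarith) le_rfl

lemma achievable_succ {p : ℕ} (hp : p ∈ Icc 1 P) (hs : 0 ≤ s (m + 1))
    (hrec : ∀ k1 k2 : ℤ,
      IsLeast {k : ℤ | (p : ℝ) * granularity P pr (m + 1) ≤ (k : ℝ) * granularity P pr m} k1 →
      IsLeast {k : ℤ | (p : ℝ) * granularity P pr (m + 1) ≤
        (k : ℝ) * granularity P pr m + (pr (m + 1) : ℝ)} k2 →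
      g p (m + 1) = min (if k1 ≤ (P : ℤ) then g k1.toNat m else 2)
        (s (m + 1) + if 1 ≤ k2 then g k2.toNat m else 0))
    (hIH : ∀ q ∈ Icc 1 P, g q m < 2 →
      Achievable pr s m (q * granularity P pr m) (g q m))
    (hlt : g p (m + 1) < 2) :
    Achievable pr s (m + 1) (p * granularity P pr (m + 1)) (g p (m + 1)) := by
  set c := (p : ℝ) * granularity P pr (m + 1)
  set d := granularity P pr m
  have hd : 0 < d := granularity_pos P pr m
  set k1 := ⌈c / d⌉
  set k2 := ⌈(c - pr (m + 1)) / d⌉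
  have hk1 : IsLeast _ k1 := isLeast_ceil_div c d hd
  have hk2 : IsLeast _ k2 := isLeast_ceil_sub_div c d (pr (m + 1)) hd
  have hk2P : k2 ≤ P := hk2.2 <| by
    have hpP : (p : ℝ) ≤ P := by exact_mod_cast (mem_Icc.mp hp).2
    have := natCast_mul_granularity_succ_le P pr m
    simp only [Set.mem_ofPred_eq, Int.cast_natCast]
    nlinarith [(granularity_pos P pr (m + 1)).le]
  rw [hrec _ _ hk1 hk2] at hlt ⊢
  obtain h | h := min_choice (if k1 ≤ (P : ℤ) then g k1.toNat m else 2)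
    (s (m + 1) + if 1 ≤ k2 then g k2.toNat m else 0)
    <;> rw [h] at hlt ⊢
  · have hc : 0 < c := mul_pos (by exact_mod_cast (mem_Icc.mp hp).1) (granularity_pos P pr _)
    exact achievable_of_skip_item hd.le hc hk1.1 hIH hlt
  · exact achievable_of_take_item hd.le hs hk2.1 hk2P hIH hlt

end Recursion

theorem fptas_nn_feasibility_general (n P : ℕ)
    (pr : ℕ → ℕ)
    (s : ℕ → ℝ) (hs : ∀ j, 0 < s j ∧ s j ≤ 1)
    (g : ℕ → ℕ → ℝ)
    (hg0 : ∀ p ∈ Finset.Icc 1 P, g p 0 = 2)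
    (hgrec : ∀ i ∈ Finset.Icc 1 n, ∀ p ∈ Finset.Icc 1 P, ∀ k1 k2 : ℤ,
      IsLeast {k : ℤ | (p : ℝ) * granularity P pr i ≤ (k : ℝ) * granularity P pr (i - 1)} k1 →
      IsLeast {k : ℤ | (p : ℝ) * granularity P pr i ≤
        (k : ℝ) * granularity P pr (i - 1) + (pr i : ℝ)} k2 →
      g p i = min (if k1 ≤ (P : ℤ) then g k1.toNat (i - 1) else 2)
        (s i + if 1 ≤ k2 then g k2.toNat (i - 1) else 0)) :
    ∀ i ∈ Finset.Icc 1 n, ∀ p ∈ Finset.Icc 1 P, g p i < 2 →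
      ∃ M : Finset ℕ, M ⊆ Finset.Icc 1 i ∧
        (p : ℝ) * granularity P pr i ≤ (∑ j ∈ M, (pr j : ℝ)) ∧
        (∑ j ∈ M, s j) ≤ g p i := by
  suffices h : ∀ i ≤ n, ∀ p ∈ Icc 1 P, g p i < 2 →
      Achievable pr s i (p * granularity P pr i) (g p i) from
    fun i hi p hp hlt => h i (mem_Icc.mp hi).2 p hp hlt
  intro i
  induction i with
  | zero =>
    intro _ p hp hlt
    simp [hg0 p hp] at hlt
  | succ m ih =>
    intro hm p hp hlt
    exact achievable_succ hp (hs (m + 1)).1.le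
      (hgrec (m + 1) (mem_Icc.mpr ⟨by omega, hm⟩) p hp) (ih (by omega)) hlt

theorem fptas_nn_feasibility (n P : ℕ) (hP : 1 ≤ P)
    (pr : ℕ → ℕ) (hpr : ∀ j, 1 ≤ pr j)
    (s : ℕ → ℝ) (hs : ∀ j, 0 < s j ∧ s j ≤ 1)
    (g : ℕ → ℕ → ℝ)
    (hg0 : ∀ p ∈ Finset.Icc 1 P, g p 0 = 2)
    (hgrec : ∀ i ∈ Finset.Icc 1 n, ∀ p ∈ Finset.Icc 1 P, ∀ k1 k2 : ℤ,
      IsLeast {k : ℤ | (p : ℝ) * granularity P pr i ≤ (k : ℝ) * granularity P pr (i - 1)} k1 →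
      IsLeast {k : ℤ | (p : ℝ) * granularity P pr i ≤
        (k : ℝ) * granularity P pr (i - 1) + (pr i : ℝ)} k2 →
      g p i = min (if k1 ≤ (P : ℤ) then g k1.toNat (i - 1) else 2)
        (s i + if 1 ≤ k2 then g k2.toNat (i - 1) else 0)) :
    ∀ i ∈ Finset.Icc 1 n, ∀ p ∈ Finset.Icc 1 P, g p i < 2 →
      ∃ M : Finset ℕ, M ⊆ Finset.Icc 1 i ∧
        (p : ℝ) * granularity P pr i ≤ (∑ j ∈ M, (pr j : ℝ)) ∧
        (∑ j ∈ M, s j) ≤ g p i :=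
  fptas_nn_feasibility_general n P pr s hs g hg0 hgrec
end

section
/- Let V be a finite vertex set with distances c : V × V → ℝ and a fixed start vertex s ∈ V. For T ⊆ V \ {s} nonempty and v ∈ T, let f(T,v) be the minimum length of a path starting at s, ending at v, and visiting exactly the vertices T ∪ {s}, each exactly once. Then for |T| ≥ 2: f(T,v) = min over u ∈ T \ {v} of ( f(T \ {v}, u) + c(u,v) ), and f({v},v) = c(s,v). Moreover, the length of the shortest Hamiltonian cycle through all of V equals min over u ∈ V \ {s} of ( f(V \ {s}, u) + c(u,s) ) when |V| ≥ 2. -/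
/-!
Bellman's principle of optimality: deleting the last vertex `v` of an `s`-path through
`insert s T` leaves an `s`-path through `insert s (T.erase v)` ending at some `u ∈ T.erase v`,
and conversely every such path extends by the edge `u → v`; the cost changes by `c u v`.
Hence the least cost of the former is the least of `f (T.erase v) u + c u v`. Likewise a tour
through all of `V` is an `s`-path through `V` closed by an edge `u → s`.
-/

/-- The total length of a walk given as a list of successively visited vertices. -/
def walkCost {V : Type*} (c : V → V → ℝ) : List V → ℝ
  | [] => 0
  | [_] => 0
  | a :: b :: t => c a b + walkCost c (b :: t)

theorem List.Nodup.ne_of_head?_of_getLast? {α : Type*} {l : List α} {a b : α} (hn : l.Nodup)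
    (ha : l.head? = some a) (hb : l.getLast? = some b) (hlen : 2 ≤ l.length) : a ≠ b := by
  rintro rfl
  rw [List.head?_eq_getElem?, List.getElem?_eq_some_iff] at ha
  rw [List.getLast?_eq_getElem?, List.getElem?_eq_some_iff] at hb
  obtain ⟨_, ha⟩ := ha
  obtain ⟨_, hb⟩ := hb
  have := hn.getElem_inj_iff.1 (ha.trans hb.symm)
  omega

theorem isLeast_of_mem_iff_exists_add {ι α : Type*} [AddCommMonoid α] [PartialOrder α]
    [IsOrderedAddMonoid α] {U : Set ι} {A : Set α} {B : ι → Set α} {a : α} {b d : ι → α} (hA : IsLeast A a) (hB : ∀ u ∈ U, IsLeast (B u) (b u))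
    (h : ∀ x, x ∈ A ↔ ∃ u ∈ U, ∃ y ∈ B u, x = y + d u) :
    IsLeast {x | ∃ u ∈ U, x = b u + d u} a := by
  have le_of_mem : ∀ u ∈ U, a ≤ b u + d u := fun u hu =>
    hA.2 ((h _).2 ⟨u, hu, b u, (hB u hu).1, rfl⟩)
  obtain ⟨u, hu, y, hy, rfl⟩ := (h a).1 hA.1
  have : b u + d u ≤ y + d u := by gcongr; exact (hB u hu).2 hy
  exact ⟨⟨u, hu, le_antisymm (le_of_mem u hu) this⟩, fun x ⟨u', hu', hx⟩ =>
    hx ▸ le_of_mem u' hu'⟩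

section

variable {V : Type*} (c : V → V → ℝ)

theorem walkCost_append_singleton {w : List V} {u : V} (h : w.getLast? = some u) (v : V) :
    walkCost c (w ++ [v]) = walkCost c w + c u v := by
  induction w with
  | nil => simp at h
  | cons a t ih =>
    cases t with
    | nil =>
      obtain rfl : a = u := by simpa using h
      simp [walkCost]
    | cons b t =>
      rw [List.getLast?_cons_cons] at h
      change c a b + walkCost c (b :: t ++ [v]) = c a b + walkCost c (b :: t) + c u v
      rw [ih h, add_assoc]

variable [DecidableEq V] (s : V)

def pathCosts (v : V) (S : Finset V) : Set ℝ :=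
  {x | ∃ w : List V, w.Nodup ∧ w.head? = some s ∧ w.getLast? = some v ∧
    w.toFinset = S ∧ x = walkCost c w}

def tourCosts [Fintype V] : Set ℝ :=
  {x | ∃ w : List V, w.Nodup ∧ w.toFinset = Finset.univ ∧ w.head? = some s ∧
    x = walkCost c (w ++ [s])}

variable {c s}

theorem ne_of_mem_pathCosts {v : V} {S : Finset V} {x : ℝ} (hx : x ∈ pathCosts c s v S)
    (hS : 2 ≤ S.card) : v ≠ s := by
  obtain ⟨w, hn, hh, hl, hw, -⟩ := hx
  refine (hn.ne_of_head?_of_getLast? hh hl ?_).symm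
  rwa [← List.toFinset_card_of_nodup hn, hw]

theorem eq_zero_of_mem_pathCosts_singleton {v : V} {x : ℝ} (hx : x ∈ pathCosts c s v {s}) :
    x = 0 := by
  obtain ⟨w, hn, -, -, hw, rfl⟩ := hx
  have hlen : w.length = 1 := by
    rw [← List.toFinset_card_of_nodup hn, hw, Finset.card_singleton]
  obtain ⟨a, rfl⟩ := List.length_eq_one_iff.mp hlen
  rfl

theorem mem_pathCosts_insert_iff {v : V} {S : Finset V} (hsS : s ∈ S) (hvS : v ∉ S) {x : ℝ} :
    x ∈ pathCosts c s v (insert v S) ↔ ∃ u ∈ S, ∃ y ∈ pathCosts c s u S, x = y + c u v := by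
  have nodup_append_singleton {w : List V} : (w ++ [v]).Nodup ↔ v ∉ w ∧ w.Nodup := by
    rw [← List.concat_eq_append, List.nodup_concat]
  have toFinset_append_singleton (w : List V) : (w ++ [v]).toFinset = insert v w.toFinset := by
    rw [List.toFinset_append, Finset.union_comm]; rfl
  constructor
  · rintro ⟨w, hn, hh, hl, hw, rfl⟩
    obtain ⟨w, rfl⟩ := List.getLast?_eq_some_iff.mp hl
    obtain ⟨hvw, hn⟩ := nodup_append_singleton.mp hn
    replace hw : w.toFinset = S := by
      rw [← Finset.erase_insert hvS, ← hw, toFinset_append_singleton,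
        Finset.erase_insert (List.mem_toFinset.not.mpr hvw)]
    have hne : w ≠ [] := List.ne_nil_of_mem (a := s) (by rwa [← List.mem_toFinset, hw])
    rw [List.head?_append_of_ne_nil _ hne] at hh
    have hl := List.getLast?_eq_some_getLast hne
    refine ⟨_, by rw [← hw, List.mem_toFinset]; exact List.getLast_mem hne,
      _, ⟨w, hn, hh, hl, hw, rfl⟩, walkCost_append_singleton c hl v⟩
  · rintro ⟨u, -, y, ⟨w, hn, hh, hl, hw, rfl⟩, rfl⟩
    have hvw : v ∉ w := by rwa [← List.mem_toFinset, hw]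
    refine ⟨w ++ [v], nodup_append_singleton.mpr ⟨hvw, hn⟩, ?_, List.getLast?_concat, ?_,
      (walkCost_append_singleton c hl v).symm⟩
    · rw [List.head?_append, hh]; rfl
    · rw [toFinset_append_singleton, hw]

theorem mem_pathCosts_insert_iff_exists_erase {T : Finset V} {v : V} (hsT : s ∉ T) (hvT : v ∈ T)
    (hT : 2 ≤ T.card) {x : ℝ} :
    x ∈ pathCosts c s v (insert s T) ↔
      ∃ u ∈ T.erase v, ∃ y ∈ pathCosts c s u (insert s (T.erase v)), x = y + c u v := by
  have hsT' : s ∉ T.erase v := fun h => hsT (Finset.mem_of_mem_erase h)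
  have hcard : 2 ≤ (insert s (T.erase v)).card := by
    rw [Finset.card_insert_of_notMem hsT', Finset.card_erase_of_mem hvT]
    omega
  have hvs : v ∉ insert s (T.erase v) := by
    simpa using fun h : v = s => hsT (h ▸ hvT)
  rw [← Finset.insert_erase hvT, Finset.insert_comm, Finset.erase_insert (Finset.notMem_erase v T),
    mem_pathCosts_insert_iff (Finset.mem_insert_self s _) hvs]
  exact exists_congr fun u => ⟨fun ⟨hu, y, hy, hx⟩ =>
    ⟨(Finset.mem_insert.mp hu).resolve_left (ne_of_mem_pathCosts hy hcard), y, hy, hx⟩,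
    fun ⟨hu, h⟩ => ⟨Finset.mem_insert_of_mem hu, h⟩⟩

theorem mem_tourCosts_iff [Fintype V] {x : ℝ} :
    x ∈ tourCosts c s ↔ ∃ u, ∃ y ∈ pathCosts c s u Finset.univ, x = y + c u s := by
  constructor
  · rintro ⟨w, hn, hw, hh, rfl⟩
    have hne : w ≠ [] := by rintro rfl; simp at hh
    have hl := List.getLast?_eq_some_getLast hne
    exact ⟨_, _, ⟨w, hn, hh, hl, hw, rfl⟩, walkCost_append_singleton c hl s⟩
  · rintro ⟨u, _, ⟨w, hn, hh, hl, hw, rfl⟩, rfl⟩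
    exact ⟨w, hn, hw, hh, (walkCost_append_singleton c hl s).symm⟩

end

theorem held_karp_recursion {V : Type*} [Fintype V] [DecidableEq V]
    (c : V → V → ℝ) (s : V) (f : Finset V → V → ℝ)
    (hf : ∀ (T : Finset V) (v : V), v ∈ T → s ∉ T →
      IsLeast {x : ℝ | ∃ w : List V, w.Nodup ∧ w.head? = some s ∧ w.getLast? = some v ∧
        w.toFinset = insert s T ∧ x = walkCost c w} (f T v)) :
    (∀ (T : Finset V) (v : V), s ∉ T → v ∈ T → 2 ≤ T.card →
      f T v = sInf {x : ℝ | ∃ u ∈ T.erase v, x = f (T.erase v) u + c u v}) ∧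
    (∀ v : V, v ≠ s → f {v} v = c s v) ∧
    (2 ≤ Fintype.card V →
      ∀ tsp : ℝ,
        IsLeast {x : ℝ | ∃ w : List V, w.Nodup ∧ w.toFinset = Finset.univ ∧
          w.head? = some s ∧ x = walkCost c (w ++ [s])} tsp →
        tsp = sInf {x : ℝ | ∃ u ∈ Finset.univ.erase s,
          x = f (Finset.univ.erase s) u + c u s}) := by
  refine ⟨fun T v hsT hvT hT => ?_, fun v hvs => ?_, fun hV tsp htsp => ?_⟩
  · have hsT' : s ∉ T.erase v := fun h => hsT (Finset.mem_of_mem_erase h)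
    exact (isLeast_of_mem_iff_exists_add (A := pathCosts c s v (insert s T)) (hf T v hvT hsT)
      (fun u hu => hf _ u hu hsT') fun x => mem_pathCosts_insert_iff_exists_erase hsT hvT hT
      ).csInf_eq.symm
  · have hsv : s ∉ ({v} : Finset V) := by simpa using hvs.symm
    have hpath : f {v} v ∈ pathCosts c s v (insert v {s}) := by
      rw [Finset.pair_comm]
      exact (hf {v} v (Finset.mem_singleton_self v) hsv).1
    obtain ⟨u, hu, y, hy, hfy⟩ :=
      (mem_pathCosts_insert_iff (Finset.mem_singleton_self s) (by simpa using hvs)).1 hpath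
    rw [Finset.mem_singleton.mp hu] at hfy
    rw [hfy, eq_zero_of_mem_pathCosts_singleton hy, zero_add]
  · have hs : s ∉ Finset.univ.erase s := Finset.notMem_erase s _
    have huniv : insert s (Finset.univ.erase s) = Finset.univ :=
      Finset.insert_erase (Finset.mem_univ s)
    refine (isLeast_of_mem_iff_exists_add (A := tourCosts c s)
      (B := fun u => pathCosts c s u (insert s (Finset.univ.erase s))) htsp
      (fun u hu => hf _ u hu hs) fun x => ?_).csInf_eq.symm
    simp only [huniv, mem_tourCosts_iff]
    exact exists_congr fun u => ⟨fun ⟨y, hy, hx⟩ => ⟨Finset.mem_erase.2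
      ⟨ne_of_mem_pathCosts hy (by rwa [Finset.card_univ]), Finset.mem_univ u⟩, y, hy, hx⟩,
      fun ⟨_, h⟩ => h⟩
end
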